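/- Let ω ∈ L¹(-1,1) with ω(t) > 0 almost everywhere on (-1,1), and let -1 = x₀ < x₁ < ⋯ < x_N = 1. Then for any data η₁,…,η_N ∈ ℝ there exists a unique polynomial p of degree ≤ N-1 such that (1/h_i) ∫_{x_{i-1}}^{x_i} p(t) ω(t) dt = η_i for all i = 1,…,N, where h_i = x_i - x_{i-1}. -/

import Mathlib

/-!
A polynomial `p` of degree `< N` whose weighted averages over the `N` cells all vanish is
zero: on each cell `p` cannot keep a strict sign (it would make `∫ p ω` nonzero, since `ω > 0`
a.e.), so by the intermediate value theorem it has a root inside each open cell, i.e. `N`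
distinct roots. Hence the linear map from `ℙ_{N-1}` to `ℝ^N` sending `p` to its weighted cell
averages is injective, and between spaces of equal dimension `N` it is then bijective.
-/

open MeasureTheory Set Polynomial

theorem IsPreconnected.forall_pos_or_forall_neg_of_ne_zero {X α : Type*} [TopologicalSpace X]
    [LinearOrder α] [TopologicalSpace α] [OrderClosedTopology α] [Zero α] {s : Set X}
    (hs : IsPreconnected s) {f : X → α} (hf : ContinuousOn f s) (hne : ∀ x ∈ s, f x ≠ 0) :
    (∀ x ∈ s, 0 < f x) ∨ ∀ x ∈ s, f x < 0 := by
  by_contra! h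
  obtain ⟨⟨u, hu, hfu⟩, v, hv, hfv⟩ := h
  obtain ⟨c, hc, hfc⟩ := hs.intermediate_value₂ hu hv hf continuousOn_const hfu hfv
  exact hne c hc hfc

theorem intervalIntegral_pos_of_ae_pos_on {f : ℝ → ℝ} {a b : ℝ}
    (hfi : IntervalIntegrable f volume a b) (hpos : ∀ᵐ t ∂volume.restrict (Ioo a b), 0 < f t)
    (hab : a < b) : 0 < ∫ t in a..b, f t := by
  rw [intervalIntegral.integral_of_le hab.le, integral_Ioc_eq_integral_Ioo,
    setIntegral_pos_iff_support_of_nonneg_ae (hpos.mono fun _ h => h.le)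
      (hfi.1.mono_set Ioo_subset_Ioc_self)]
  have hsupp : volume.restrict (Ioo a b) (Function.support f)ᶜ = 0 :=
    ae_iff.mp (hpos.mono fun _ h => h.ne')
  calc 0 < volume (Ioo a b) := (Measure.measure_Ioo_pos volume).mpr hab
    _ = volume.restrict (Ioo a b) (univ ∩ Function.support f) := by
      rw [measure_inter_conull hsupp, Measure.restrict_apply_univ]
    _ = volume (Function.support f ∩ Ioo a b) := by
      rw [univ_inter, Measure.restrict_apply' measurableSet_Ioo]

theorem exists_mem_Ioo_eq_zero_of_intervalIntegral_mul_eq_zero {f ω : ℝ → ℝ} {a b : ℝ}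
    (hab : a < b) (hf : ContinuousOn f (Icc a b)) (hω : IntervalIntegrable ω volume a b)
    (hωpos : ∀ᵐ t ∂volume.restrict (Ioo a b), 0 < ω t) (h : ∫ t in a..b, f t * ω t = 0) :
    ∃ c ∈ Ioo a b, f c = 0 := by
  by_contra! hne
  have hfω : IntervalIntegrable (fun t => f t * ω t) volume a b :=
    hω.continuousOn_mul (by rwa [uIcc_of_le hab.le])
  rcases isPreconnected_Ioo.forall_pos_or_forall_neg_of_ne_zero
    (hf.mono Ioo_subset_Icc_self) hne with hfpos | hfneg
  · refine (intervalIntegral_pos_of_ae_pos_on hfω ?_ hab).ne' h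
    filter_upwards [hωpos, ae_restrict_mem measurableSet_Ioo] with t hωt ht
    exact mul_pos (hfpos t ht) hωt
  · refine (intervalIntegral_pos_of_ae_pos_on hfω.neg ?_ hab).ne' ?_
    · filter_upwards [hωpos, ae_restrict_mem measurableSet_Ioo] with t hωt ht
      exact neg_pos.mpr (mul_neg_of_neg_of_pos (hfneg t ht) hωt)
    · simp only [Pi.neg_apply, intervalIntegral.integral_neg, h, neg_zero]

theorem strictMono_of_forall_mem_Ioo_castSucc_succ {α : Type*} [Preorder α] {N : ℕ}
    {x : Fin (N + 1) → α} (hx : Monotone x) {r : Fin N → α}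
    (hr : ∀ i, r i ∈ Ioo (x i.castSucc) (x i.succ)) : StrictMono r := fun i j hij =>
  calc r i < x i.succ := (hr i).2
    _ ≤ x j.castSucc := hx (Fin.succ_le_castSucc_iff.mpr hij)
    _ < r j := (hr j).1

theorem Polynomial.eq_zero_of_degree_lt_of_forall_isRoot_mem_Ioo {R : Type*} [Field R]
    [LinearOrder R] {N : ℕ} {x : Fin (N + 1) → R} (hx : Monotone x) {p : R[X]}
    (hp : p.degree < N) (hroot : ∀ i : Fin N, ∃ c ∈ Ioo (x i.castSucc) (x i.succ), p.IsRoot c) :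
    p = 0 := by
  choose r hr hpr using hroot
  refine eq_zero_of_degree_lt_of_eval_index_eq_zero (s := Finset.univ)
    (strictMono_of_forall_mem_Ioo_castSucc_succ hx hr).injective.injOn ?_ fun i _ => hpr i
  rwa [Finset.card_univ, Fintype.card_fin]

theorem Polynomial.existsUnique_degree_lt_apply_eq {K V : Type*} [Field K]
    [AddCommGroup V] [Module K V] [FiniteDimensional K V] {N : ℕ} (hV : Module.finrank K V = N)
    (L : K[X] →ₗ[K] V) (hL : ∀ p : K[X], p.degree < N → L p = 0 → p = 0) (v : V) :
    ∃! p : K[X], p.degree < N ∧ L p = v := by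
  let L' := L.domRestrict (degreeLT K N)
  have hinj : Function.Injective L' := by
    rw [← LinearMap.ker_eq_bot, LinearMap.ker_eq_bot']
    exact fun q hq => Subtype.ext (hL q (mem_degreeLT.mp q.2) hq)
  have hdim : Module.finrank K (degreeLT K N) = Module.finrank K V := by
    rw [hV, (degreeLTEquiv K N).finrank_eq, Module.finrank_fin_fun]
  obtain ⟨q, hq⟩ := (LinearMap.injective_iff_surjective_of_finrank_eq_finrank hdim).mp hinj v
  refine ⟨q, ⟨mem_degreeLT.mp q.2, hq⟩, fun p ⟨hp, hpv⟩ => ?_⟩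
  have hLp : L' ⟨p, mem_degreeLT.mpr hp⟩ = L' q := hpv.trans hq.symm
  exact congrArg Subtype.val (hinj hLp)

noncomputable def Polynomial.weightedIntervalIntegral {a b : ℝ} {ω : ℝ → ℝ}
    (hω : IntervalIntegrable ω volume a b) : ℝ[X] →ₗ[ℝ] ℝ where
  toFun p := ∫ t in a..b, p.eval t * ω t
  map_add' p q := by
    simp only [eval_add, add_mul]
    exact intervalIntegral.integral_add (hω.continuousOn_mul p.continuousOn)
      (hω.continuousOn_mul q.continuousOn)
  map_smul' c p := by
    simp only [eval_smul, smul_eq_mul, mul_assoc, RingHom.id_apply]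
    exact intervalIntegral.integral_const_mul c _

theorem weighted_histopolation_unisolvent_general (N : ℕ)
    (x : Fin (N + 1) → ℝ) (hx : StrictMono x)
    (hx0 : x 0 = -1) (hxN : x (Fin.last N) = 1)
    (ω : ℝ → ℝ) (hω : IntegrableOn ω (Set.Ioo (-1 : ℝ) 1))
    (hpos : ∀ᵐ t ∂(volume.restrict (Set.Ioo (-1 : ℝ) 1)), 0 < ω t)
    (η : Fin N → ℝ) :
    ∃! p : Polynomial ℝ, p.degree < (N : WithBot ℕ) ∧
      ∀ i : Fin N,
        (1 / (x i.succ - x i.castSucc)) *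
          ∫ t in (x i.castSucc)..(x i.succ), p.eval t * ω t = η i := by
  have hcell (i : Fin N) : x i.castSucc < x i.succ := hx Fin.castSucc_lt_succ
  have hsub (i : Fin N) : Ioo (x i.castSucc) (x i.succ) ⊆ Ioo (-1) 1 := by
    rw [← hx0, ← hxN]
    exact Ioo_subset_Ioo (hx.monotone (Fin.zero_le _)) (hx.monotone (Fin.le_last _))
  have hωi (i : Fin N) : IntervalIntegrable ω volume (x i.castSucc) (x i.succ) :=
    (intervalIntegrable_iff_integrableOn_Ioo_of_le (hcell i).le).mpr (hω.mono_set (hsub i))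
  let L : ℝ[X] →ₗ[ℝ] (Fin N → ℝ) := LinearMap.pi fun i =>
    (1 / (x i.succ - x i.castSucc)) • weightedIntervalIntegral (hωi i)
  have hL (p : ℝ[X]) (hp : p.degree < N) (hLp : L p = 0) : p = 0 := by
    refine eq_zero_of_degree_lt_of_forall_isRoot_mem_Ioo hx.monotone hp fun i => ?_
    have hint : ∫ t in (x i.castSucc)..(x i.succ), p.eval t * ω t = 0 :=
      (smul_eq_zero.mp (congrFun hLp i)).resolve_left
        (one_div_ne_zero (sub_ne_zero.mpr (hcell i).ne'))
    exact exists_mem_Ioo_eq_zero_of_intervalIntegral_mul_eq_zero (hcell i) p.continuousOn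
      (hωi i) (ae_restrict_of_ae_restrict_of_subset (hsub i) hpos) hint
  have hunique := existsUnique_degree_lt_apply_eq (Module.finrank_fin_fun ℝ) L hL η
  simp only [funext_iff] at hunique
  exact hunique

/-- Unisolvence of weighted histopolation: given an integrable weight `ω` positive a.e. on
`(-1,1)`, nodes `-1 = x₀ < ⋯ < x_N = 1`, and data `η`, there is a unique polynomial of degree
at most `N-1` whose weighted cell averages match the data. -/
theorem weighted_histopolation_unisolvent (N : ℕ) (hN : 0 < N)
    (x : Fin (N + 1) → ℝ) (hx : StrictMono x)
    (hx0 : x 0 = -1) (hxN : x (Fin.last N) = 1)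
    (ω : ℝ → ℝ) (hω : IntegrableOn ω (Set.Ioo (-1 : ℝ) 1))
    (hpos : ∀ᵐ t ∂(volume.restrict (Set.Ioo (-1 : ℝ) 1)), 0 < ω t)
    (η : Fin N → ℝ) :
    ∃! p : Polynomial ℝ, p.degree < (N : WithBot ℕ) ∧
      ∀ i : Fin N,
        (1 / (x i.succ - x i.castSucc)) *
          ∫ t in (x i.castSucc)..(x i.succ), p.eval t * ω t = η i :=
  weighted_histopolation_unisolvent_general N x hx hx0 hxN ω hω hpos η
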